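/- arXiv:1209.1166 — 3 statements merged into one kernel-verified Lean document; each statement's English description precedes it below -/
import Mathlib

section
/- Let c ∈ ℝ with |c| ≤ 4√2/π. Then for every T > 0 and every C¹ curve γ : [0,T] → ℝ with γ(T) − γ(0) ∈ 2πℤ, one has ∫₀^T (γ'(t)² + 1 − cos(γ(t)) − c·γ'(t)) dt ≥ 0. Moreover, the constant curve γ ≡ 0 gives the value 0, so 0 is the least value of this integral over all such closed curves. -/
open Real intervalIntegral MeasureTheory

noncomputable def pendH : ℝ → ℝ := fun x => 2 * Real.sqrt 2 * |Real.sin (x / 2)|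

lemma pendH_cont : Continuous pendH := by
  unfold pendH
  fun_prop

lemma pendH_per : Function.Periodic pendH (2 * Real.pi) := by
  intro x
  unfold pendH
  have : (x + 2 * Real.pi) / 2 = x / 2 + Real.pi := by ring
  rw [this, Real.sin_add_pi, abs_neg]

lemma pendH_integral : ∫ x in (0:ℝ)..(2 * Real.pi), pendH x = 8 * Real.sqrt 2 := by
  have h1 : ∫ x in (0:ℝ)..(2 * Real.pi), pendH x
      = ∫ x in (0:ℝ)..(2 * Real.pi), 2 * Real.sqrt 2 * Real.sin (x / 2) := by
    apply intervalIntegral.integral_congr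
    intro x hx
    rw [Set.uIcc_of_le (by positivity)] at hx
    unfold pendH
    rw [abs_of_nonneg (Real.sin_nonneg_of_nonneg_of_le_pi (by linarith [hx.1])
      (by linarith [hx.2]))]
  have h2 : ∫ x in (0:ℝ)..(2 * Real.pi), Real.sin (x / 2) = 4 := by
    rw [intervalIntegral.integral_comp_div (f := Real.sin) two_ne_zero]
    norm_num [integral_sin]
  rw [h1, intervalIntegral.integral_const_mul, h2]
  ring

lemma pend_pointwise (a x : ℝ) : |pendH x * a| ≤ a ^ 2 + (1 - Real.cos x) := by
  have hcos : Real.cos x = 2 * Real.cos (x / 2) ^ 2 - 1 := by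
    rw [← Real.cos_two_mul]
    congr 1
    ring
  have hsq : Real.sin (x / 2) ^ 2 + Real.cos (x / 2) ^ 2 = 1 := Real.sin_sq_add_cos_sq _
  have h1 : (1 : ℝ) - Real.cos x = 2 * Real.sin (x / 2) ^ 2 := by
    rw [hcos]; nlinarith
  unfold pendH
  rw [abs_mul, abs_mul, abs_mul, abs_abs, abs_of_nonneg (by norm_num : (0:ℝ) ≤ 2),
    abs_of_nonneg (Real.sqrt_nonneg 2), h1]
  nlinarith [sq_nonneg (Real.sqrt 2 * |Real.sin (x / 2)| - |a|),
    Real.sq_sqrt (by norm_num : (0:ℝ) ≤ 2), sq_abs (Real.sin (x / 2)), sq_abs a]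

lemma pend_action_nonneg (c : ℝ) (hc : |c| ≤ 4 * Real.sqrt 2 / Real.pi)
    (T : ℝ) (hT : 0 < T) (γ : ℝ → ℝ) (hγ : ContDiff ℝ 1 γ)
    (k : ℤ) (hk : γ T - γ 0 = 2 * Real.pi * k) :
    0 ≤ ∫ t in (0:ℝ)..T, ((deriv γ t) ^ 2 + (1 - Real.cos (γ t)) - c * deriv γ t) := by
  have hγc : Continuous γ := hγ.continuous
  have hγ' : Continuous (deriv γ) := hγ.continuous_deriv le_rfl
  have hder : ∀ t, HasDerivAt γ (deriv γ t) t :=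
    fun t => (hγ.differentiable one_ne_zero t).hasDerivAt
  -- the antiderivative of pendH
  set G : ℝ → ℝ := fun x => ∫ s in (0:ℝ)..x, pendH s with hG
  have hGder : ∀ x, HasDerivAt G (pendH x) x :=
    fun x => (pendH_cont.integral_hasStrictDerivAt 0 x).hasDerivAt
  have hint : ∀ t₁ t₂, IntervalIntegrable pendH MeasureSpace.volume t₁ t₂ :=
    fun t₁ t₂ => pendH_cont.intervalIntegrable t₁ t₂
  -- FTC for the c-term
  have hFTC1 : ∫ t in (0:ℝ)..T, deriv γ t = γ T - γ 0 :=
    intervalIntegral.integral_eq_sub_of_hasDerivAt (fun t _ => hder t)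
      (hγ'.intervalIntegrable 0 T)
  -- FTC for pendH ∘ γ
  have hFTC2 : ∫ t in (0:ℝ)..T, pendH (γ t) * deriv γ t = G (γ T) - G (γ 0) := by
    apply intervalIntegral.integral_eq_sub_of_hasDerivAt
    · intro t _
      exact (hGder (γ t)).comp t (hder t)
    · exact ((pendH_cont.comp hγc).mul hγ').intervalIntegrable 0 T
  -- rewrite G (γ T) - G (γ 0) as an interval integral and evaluate using periodicity
  have hadd : (∫ s in (0:ℝ)..(γ 0), pendH s) + ∫ s in (γ 0)..(γ T), pendH s
      = ∫ s in (0:ℝ)..(γ T), pendH s :=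
    intervalIntegral.integral_add_adjacent_intervals (hint _ _) (hint _ _)
  have hγT : γ T = γ 0 + k • (2 * Real.pi) := by
    have : (k : ℝ) • (2 * Real.pi) = 2 * Real.pi * k := by
      simp [smul_eq_mul]; ring
    rw [← Int.cast_smul_eq_zsmul ℝ, this]
    linarith
  have hval : ∫ s in (γ 0)..(γ T), pendH s = (k : ℝ) * (8 * Real.sqrt 2) := by
    rw [hγT, pendH_per.intervalIntegral_add_zsmul_eq k (γ 0) hint,
      pendH_per.intervalIntegral_add_eq (γ 0) 0, zero_add, pendH_integral,
      ← Int.cast_smul_eq_zsmul ℝ, smul_eq_mul]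
  have hGdiff : G (γ T) - G (γ 0) = (k : ℝ) * (8 * Real.sqrt 2) := by
    rw [← hval]; simp only [hG]; linarith [hadd]
  -- integrability of the main pieces
  have hcontA : Continuous fun t => (deriv γ t) ^ 2 + (1 - Real.cos (γ t)) := by fun_prop
  have hcontB : Continuous fun t => pendH (γ t) * deriv γ t :=
    (pendH_cont.comp hγc).mul hγ'
  -- A := kinetic + potential part
  set A : ℝ := ∫ t in (0:ℝ)..T, ((deriv γ t) ^ 2 + (1 - Real.cos (γ t))) with hA
  have hAineq : ∀ (ε : ℝ), ε = 1 ∨ ε = -1 →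
      ε * ((k : ℝ) * (8 * Real.sqrt 2)) ≤ A := by
    intro ε hε
    have : ∫ t in (0:ℝ)..T, ε * (pendH (γ t) * deriv γ t)
        ≤ ∫ t in (0:ℝ)..T, ((deriv γ t) ^ 2 + (1 - Real.cos (γ t))) := by
      apply intervalIntegral.integral_mono_on hT.le
        ((continuous_const.mul hcontB).intervalIntegrable 0 T)
        (hcontA.intervalIntegrable 0 T)
      intro t _
      have h1 := pend_pointwise (deriv γ t) (γ t)
      have h2 : ε * (pendH (γ t) * deriv γ t) ≤ |pendH (γ t) * deriv γ t| := by
        rcases hε with rfl | rfl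
        · simpa using le_abs_self (pendH (γ t) * deriv γ t)
        · simpa using neg_le_abs (pendH (γ t) * deriv γ t)
      simp only [Pi.mul_apply]
      linarith
    rw [intervalIntegral.integral_const_mul, hFTC2, hGdiff] at this
    exact this
  have hAk : |(k : ℝ)| * (8 * Real.sqrt 2) ≤ A := by
    rcases abs_cases (k : ℝ) with ⟨h, _⟩ | ⟨h, _⟩
    · rw [h]; simpa using hAineq 1 (Or.inl rfl)
    · rw [h]; have := hAineq (-1) (Or.inr rfl); linarith
  -- the c-term
  have hcterm : ∫ t in (0:ℝ)..T, c * deriv γ t = c * (2 * Real.pi * k) := by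
    rw [intervalIntegral.integral_const_mul, hFTC1, hk]
  have hsplit : ∫ t in (0:ℝ)..T, ((deriv γ t) ^ 2 + (1 - Real.cos (γ t)) - c * deriv γ t)
      = A - c * (2 * Real.pi * k) := by
    rw [hA, ← hcterm]
    exact intervalIntegral.integral_sub (hcontA.intervalIntegrable 0 T)
      ((continuous_const.mul hγ').intervalIntegrable 0 T)
  rw [hsplit]
  -- finish with the bound on c
  have hπ : (0:ℝ) < Real.pi := Real.pi_pos
  have hbound : |c| * (2 * Real.pi) ≤ 8 * Real.sqrt 2 := by
    rw [le_div_iff₀ hπ] at hc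
    linarith
  have h1 : c * (2 * Real.pi * k) ≤ |c| * (2 * Real.pi) * |(k : ℝ)| := by
    calc c * (2 * Real.pi * k) ≤ |c * (2 * Real.pi * k)| := le_abs_self _
    _ = |c| * (2 * Real.pi) * |(k : ℝ)| := by
        rw [abs_mul, abs_mul, abs_of_nonneg (by positivity : (0:ℝ) ≤ 2 * Real.pi)]
        ring
  have h2 : |c| * (2 * Real.pi) * |(k : ℝ)| ≤ 8 * Real.sqrt 2 * |(k : ℝ)| := by
    apply mul_le_mul_of_nonneg_right hbound (abs_nonneg _)
  linarith [hAk]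



/-- For the simple pendulum Lagrangian `L(x,v) = v² + (1 - cos x)` and any
cohomology class `c` with `|c| ≤ 4√2/π`, the `c`-action of every closed C¹ curve is `≥ 0`;
the constant curve `γ ≡ 0` gives the value `0`, and `0` is the least value of the action
over all closed curves. -/
theorem pendulum_alpha_flat (c : ℝ) (hc : |c| ≤ 4 * Real.sqrt 2 / Real.pi) :
    (∀ T : ℝ, 0 < T → ∀ γ : ℝ → ℝ, ContDiff ℝ 1 γ →
      (∃ k : ℤ, γ T - γ 0 = 2 * Real.pi * k) →
      0 ≤ ∫ t in (0:ℝ)..T, ((deriv γ t) ^ 2 + (1 - Real.cos (γ t)) - c * deriv γ t)) ∧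
    (∀ T : ℝ, 0 < T →
      (∫ t in (0:ℝ)..T, ((deriv (fun _ : ℝ => (0:ℝ)) t) ^ 2
        + (1 - Real.cos ((fun _ : ℝ => (0:ℝ)) t)) - c * deriv (fun _ : ℝ => (0:ℝ)) t)) = 0) ∧
    IsLeast { A : ℝ | ∃ T : ℝ, 0 < T ∧ ∃ γ : ℝ → ℝ, ContDiff ℝ 1 γ ∧
      (∃ k : ℤ, γ T - γ 0 = 2 * Real.pi * k) ∧
      A = ∫ t in (0:ℝ)..T, ((deriv γ t) ^ 2 + (1 - Real.cos (γ t)) - c * deriv γ t) } 0 := by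
  have part2 : ∀ T : ℝ, 0 < T →
      (∫ t in (0:ℝ)..T, ((deriv (fun _ : ℝ => (0:ℝ)) t) ^ 2
        + (1 - Real.cos ((fun _ : ℝ => (0:ℝ)) t)) - c * deriv (fun _ : ℝ => (0:ℝ)) t)) = 0 := by
    intro T hT
    simp [Real.cos_zero]
  refine ⟨fun T hT γ hγ ⟨k, hk⟩ => pend_action_nonneg c hc T hT γ hγ k hk, part2, ?_, ?_⟩
  · exact ⟨1, one_pos, fun _ => (0:ℝ), contDiff_const, ⟨0, by simp⟩, (part2 1 one_pos).symm⟩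
  · rintro A ⟨T, hT, γ, hγ, ⟨k, hk⟩, rfl⟩
    exact pend_action_nonneg c hc T hT γ hγ k hk
end

section
/- Let m ≥ 1 and let c ∈ ℝᵐ satisfy |cᵢ| ≤ 4√2/π for every i = 1,…,m. Then for every T > 0 and every C¹ curve γ : [0,T] → ℝᵐ with γ(T) − γ(0) ∈ 2πℤᵐ, one has ∫₀^T (‖γ'(t)‖² + Σᵢ₌₁ᵐ (1 − cos(γᵢ(t))) − ⟨c, γ'(t)⟩) dt ≥ 0, with equality for the constant curve γ ≡ 0. -/
private lemma pp_absint : ∫ u in (0:ℝ)..(2*Real.pi), |Real.sin (u/2)| = 4 := by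
  have h1 : ∫ u in (0:ℝ)..(2*Real.pi), |Real.sin (u/2)|
      = ∫ u in (0:ℝ)..(2*Real.pi), Real.sin (u/2) := by
    apply intervalIntegral.integral_congr
    intro u hu
    rw [Set.uIcc_of_le (by positivity)] at hu
    exact abs_of_nonneg (Real.sin_nonneg_of_nonneg_of_le_pi (by linarith [hu.1])
      (by linarith [hu.2]))
  rw [h1, intervalIntegral.integral_comp_div (f := Real.sin) two_ne_zero]
  norm_num [integral_sin, Real.cos_pi]

private lemma pp_key (c T : ℝ) (hc : |c| ≤ 4 * Real.sqrt 2 / Real.pi) (hT : 0 < T)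
    (x x' : ℝ → ℝ) (hx : ∀ t, HasDerivAt x (x' t) t) (hx' : Continuous x')
    (k : ℤ) (hk : x T - x 0 = 2 * Real.pi * k) :
    0 ≤ ∫ t in (0:ℝ)..T, ((x' t) ^ 2 + (1 - Real.cos (x t)) - c * x' t) := by
  have hπ := Real.pi_pos
  have hxc : Continuous x := continuous_iff_continuousAt.2 fun t => (hx t).continuousAt
  set σ : ℝ := if 0 ≤ k then 1 else -1 with hσdef
  have hσ1 : σ = 1 ∨ σ = -1 := by unfold σ; split <;> simp
  have hσk : σ * k = |(k:ℝ)| := by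
    unfold σ; split
    · rename_i h; rw [abs_of_nonneg (by exact_mod_cast h)]; ring
    · rename_i h
      rw [abs_of_neg (show ((k:ℝ)) < 0 by exact_mod_cast not_le.1 h)]; ring
  set g : ℝ → ℝ := fun u => σ * (2 * Real.sqrt 2) * |Real.sin (u/2)| - c with hg
  have hgc : Continuous g := by
    apply Continuous.sub _ continuous_const
    exact continuous_const.mul (Real.continuous_sin.comp (by fun_prop)).abs
  have hper : Function.Periodic g (2 * Real.pi) := by
    intro u
    have h : Real.sin ((u + 2*Real.pi)/2) = - Real.sin (u/2) := by
      rw [show (u + 2*Real.pi)/2 = u/2 + Real.pi by ring, Real.sin_add_pi]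
    simp only [hg, h, abs_neg]
  -- pointwise bound
  have hpt : ∀ t, g (x t) * x' t ≤ (x' t)^2 + (1 - Real.cos (x t)) - c * x' t := by
    intro t
    set u := x t with hu
    set v := x' t with hv
    have h2 : 1 - Real.cos u = 2 * Real.sin (u/2)^2 := by
      have h := Real.cos_two_mul (u/2)
      rw [show 2*(u/2) = u by ring] at h
      have hpy := Real.sin_sq_add_cos_sq (u/2)
      nlinarith
    have h3 : σ * v ≤ |v| := by
      rcases hσ1 with h | h <;> rw [h]
      · simpa using le_abs_self v
      · simpa using neg_le_abs v
    have h4 : (0:ℝ) ≤ σ * (2 * Real.sqrt 2) * |Real.sin (u/2)| * v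
        → True := fun _ => trivial
    have h5 : σ * (2 * Real.sqrt 2) * |Real.sin (u/2)| * v
        ≤ v^2 + 2 * Real.sin (u/2)^2 := by
      have hA : (0:ℝ) ≤ 2 * Real.sqrt 2 * |Real.sin (u/2)| := by positivity
      calc σ * (2 * Real.sqrt 2) * |Real.sin (u/2)| * v
          = (2 * Real.sqrt 2 * |Real.sin (u/2)|) * (σ * v) := by ring
        _ ≤ (2 * Real.sqrt 2 * |Real.sin (u/2)|) * |v| :=
            mul_le_mul_of_nonneg_left h3 hA
        _ ≤ v^2 + 2 * Real.sin (u/2)^2 := by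
            nlinarith [sq_nonneg (Real.sqrt 2 * |Real.sin (u/2)| - |v|), sq_abs v,
              sq_abs (Real.sin (u/2)), Real.sq_sqrt (show (0:ℝ) ≤ 2 by norm_num)]
    have hgu : g u * v = σ * (2 * Real.sqrt 2) * |Real.sin (u/2)| * v - c * v := by
      rw [hg]; ring
    rw [hgu, h2]
    linarith
  -- integrability
  have hint1 : IntervalIntegrable (fun t => g (x t) * x' t) MeasureTheory.volume 0 T :=
    ((hgc.comp hxc).mul hx').intervalIntegrable _ _
  have hint2 : IntervalIntegrable
      (fun t => (x' t)^2 + (1 - Real.cos (x t)) - c * x' t) MeasureTheory.volume 0 T :=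
    (((hx'.pow 2).add (continuous_const.sub (Real.continuous_cos.comp hxc))).sub
      (continuous_const.mul hx')).intervalIntegrable _ _
  have hmono : (∫ t in (0:ℝ)..T, g (x t) * x' t)
      ≤ ∫ t in (0:ℝ)..T, ((x' t)^2 + (1 - Real.cos (x t)) - c * x' t) :=
    intervalIntegral.integral_mono_on hT.le hint1 hint2 fun t _ => hpt t
  -- change of variables
  have hcv : (∫ t in (0:ℝ)..T, g (x t) * x' t) = ∫ u in (x 0)..(x T), g u := by
    rw [← intervalIntegral.integral_comp_smul_deriv (fun t _ => hx t)
      hx'.continuousOn hgc]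
    apply intervalIntegral.integral_congr
    intro t _
    simp [smul_eq_mul, Function.comp, mul_comm]
  -- periodicity evaluation
  have hxT : x T = x 0 + k • (2 * Real.pi) := by
    have : (k:ℤ) • (2 * Real.pi) = 2 * Real.pi * k := by
      rw [zsmul_eq_mul]; ring
    rw [this]; linarith
  have hgint : ∀ a b : ℝ, IntervalIntegrable g MeasureTheory.volume a b :=
    fun a b => hgc.intervalIntegrable a b
  have hval : (∫ u in (x 0)..(x T), g u) = k • ∫ u in (0:ℝ)..(2*Real.pi), g u := by
    rw [hxT, hper.intervalIntegral_add_zsmul_eq k (x 0) hgint,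
      hper.intervalIntegral_add_eq (x 0) 0]
    norm_num
  have hgval : (∫ u in (0:ℝ)..(2*Real.pi), g u) = σ * (8 * Real.sqrt 2) - 2 * Real.pi * c := by
    have hconts : Continuous fun u : ℝ => σ * (2 * Real.sqrt 2) * |Real.sin (u/2)| := by
      apply continuous_const.mul
      exact (Real.continuous_sin.comp (continuous_id.div_const 2)).abs
    show (∫ u in (0:ℝ)..(2*Real.pi), (σ * (2 * Real.sqrt 2) * |Real.sin (u/2)| - c))
      = σ * (8 * Real.sqrt 2) - 2 * Real.pi * c
    rw [intervalIntegral.integral_sub (hconts.intervalIntegrable _ _)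
      (intervalIntegrable_const)]
    rw [intervalIntegral.integral_const_mul, pp_absint, intervalIntegral.integral_const]
    simp only [smul_eq_mul]
    ring
  -- final positivity
  have hfin : 0 ≤ (k:ℝ) * (σ * (8 * Real.sqrt 2) - 2 * Real.pi * c) := by
    have h6 : (k:ℝ) * (σ * (8 * Real.sqrt 2) - 2 * Real.pi * c)
        = |(k:ℝ)| * (8 * Real.sqrt 2) - 2 * Real.pi * ((k:ℝ) * c) := by
      linear_combination (8 * Real.sqrt 2) * hσk
    have h7 : 2 * Real.pi * ((k:ℝ) * c) ≤ |(k:ℝ)| * (8 * Real.sqrt 2) := by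
      have habs : |2 * Real.pi * ((k:ℝ) * c)| = 2 * Real.pi * (|(k:ℝ)| * |c|) := by
        rw [abs_mul (2 * Real.pi) ((k:ℝ) * c), abs_mul ((k:ℝ)) c,
          abs_of_nonneg (by positivity : (0:ℝ) ≤ 2 * Real.pi)]
      calc 2 * Real.pi * ((k:ℝ) * c) ≤ |2 * Real.pi * ((k:ℝ) * c)| := le_abs_self _
        _ = 2 * Real.pi * (|(k:ℝ)| * |c|) := habs
        _ ≤ 2 * Real.pi * (|(k:ℝ)| * (4 * Real.sqrt 2 / Real.pi)) := by
            have := hc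
            gcongr
        _ = |(k:ℝ)| * (8 * Real.sqrt 2) := by
            field_simp; ring
    linarith
  calc (0:ℝ) ≤ (k:ℝ) * (σ * (8 * Real.sqrt 2) - 2 * Real.pi * c) := hfin
    _ = k • ∫ u in (0:ℝ)..(2*Real.pi), g u := by rw [hgval, zsmul_eq_mul]
    _ = ∫ u in (x 0)..(x T), g u := hval.symm
    _ = ∫ t in (0:ℝ)..T, g (x t) * x' t := hcv.symm
    _ ≤ _ := hmono

open Finset in
/-- For the product-pendulum Lagrangian
`L(x,v) = ‖v‖² + Σᵢ (1 - cos xᵢ)` on the `m`-torus and any `c ∈ ℝᵐ` with every `|cᵢ| ≤ 4√2/π`,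
the `c`-action of every closed C¹ curve is `≥ 0`, with equality for the constant curve `γ ≡ 0`. -/
theorem product_pendulum_alpha_flat (m : ℕ) (hm : 1 ≤ m) (c : Fin m → ℝ)
    (hc : ∀ i, |c i| ≤ 4 * Real.sqrt 2 / Real.pi) :
    (∀ T : ℝ, 0 < T → ∀ γ : ℝ → (Fin m → ℝ), ContDiff ℝ 1 γ →
      (∃ k : Fin m → ℤ, ∀ i, γ T i - γ 0 i = 2 * Real.pi * k i) →
      0 ≤ ∫ t in (0:ℝ)..T,
        (∑ i, (deriv γ t i) ^ 2 + ∑ i, (1 - Real.cos (γ t i)) - ∑ i, c i * deriv γ t i)) ∧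
    (∀ T : ℝ, 0 < T →
      (∫ t in (0:ℝ)..T,
        (∑ i, (deriv (fun _ : ℝ => (fun _ : Fin m => (0:ℝ))) t i) ^ 2
          + ∑ _i : Fin m, (1 - Real.cos ((0:ℝ)))
          - ∑ i, c i * deriv (fun _ : ℝ => (fun _ : Fin m => (0:ℝ))) t i)) = 0) := by
  constructor
  · rintro T hT γ hγ ⟨k, hk⟩
    have hγd : Differentiable ℝ γ := hγ.differentiable one_ne_zero
    have hdc : Continuous (deriv γ) := hγ.continuous_deriv le_rfl
    set f : Fin m → ℝ → ℝ :=
      fun i t => (deriv γ t i)^2 + (1 - Real.cos (γ t i)) - c i * deriv γ t i with hf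
    have hfc : ∀ i, Continuous (f i) := by
      intro i
      have h1 : Continuous fun t => deriv γ t i := (continuous_apply i).comp hdc
      have h2 : Continuous fun t => γ t i := (continuous_apply i).comp hγ.continuous
      exact ((h1.pow 2).add (continuous_const.sub (Real.continuous_cos.comp h2))).sub
        (continuous_const.mul h1)
    have key : ∀ i, 0 ≤ ∫ t in (0:ℝ)..T, f i t := by
      intro i
      refine pp_key (c i) T (hc i) hT (fun t => γ t i) (fun t => deriv γ t i) ?_ ?_ (k i) (hk i)
      · intro t
        exact (ContinuousLinearMap.proj (R := ℝ) (φ := fun _ : Fin m => ℝ)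
          i).hasFDerivAt.comp_hasDerivAt t (hγd t).hasDerivAt
      · exact (continuous_apply i).comp hdc
    have heq : (∫ t in (0:ℝ)..T,
        (∑ i, (deriv γ t i) ^ 2 + ∑ i, (1 - Real.cos (γ t i)) - ∑ i, c i * deriv γ t i))
        = ∑ i, ∫ t in (0:ℝ)..T, f i t := by
      rw [← intervalIntegral.integral_finset_sum fun i _ => ((hfc i).intervalIntegrable 0 T)]
      apply intervalIntegral.integral_congr
      intro t _
      simp only [hf, Finset.sum_sub_distrib, Finset.sum_add_distrib]
    rw [heq]
    exact Finset.sum_nonneg fun i _ => key i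
  · intro T hT
    have h0 : (∫ t in (0:ℝ)..T,
        (∑ i, (deriv (fun _ : ℝ => (fun _ : Fin m => (0:ℝ))) t i) ^ 2
          + ∑ _i : Fin m, (1 - Real.cos ((0:ℝ)))
          - ∑ i, c i * deriv (fun _ : ℝ => (fun _ : Fin m => (0:ℝ))) t i))
        = ∫ t in (0:ℝ)..T, (0:ℝ) := by
      apply intervalIntegral.integral_congr
      intro t _
      simp [deriv_const', Real.cos_zero]
    rw [h0]
    simp
end

section
/- Let c ∈ ℝ with c > 4√2/π. Then there exist T > 0 and a C¹ curve γ : [0,T] → ℝ with γ(T) = γ(0) + 2π such that ∫₀^T (γ'(t)² + 1 − cos(γ(t)) − c·γ'(t)) dt < 0. -/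
open Real

lemma cos_lip (x y : ℝ) : |Real.cos x - Real.cos y| ≤ |x - y| := by
  rw [Real.cos_sub_cos]
  have h1 : |Real.sin ((x + y) / 2)| ≤ 1 := Real.abs_sin_le_one _
  have h2 : |Real.sin ((x - y) / 2)| ≤ |(x - y) / 2| := Real.abs_sin_le_abs
  calc |(-2) * Real.sin ((x + y) / 2) * Real.sin ((x - y) / 2)|
      = 2 * |Real.sin ((x + y) / 2)| * |Real.sin ((x - y) / 2)| := by
        rw [abs_mul, abs_mul]; norm_num
    _ ≤ 2 * 1 * |(x - y) / 2| := by
        apply mul_le_mul _ h2 (abs_nonneg _) (by norm_num)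
        nlinarith [abs_nonneg (Real.sin ((x+y)/2))]
    _ = |x - y| := by rw [abs_div, abs_two]; ring

lemma arsinh_le (x : ℝ) (hx : 0 ≤ x) : Real.arsinh x ≤ 2 * x + 1 := by
  rw [Real.arsinh]
  have h1 : Real.sqrt (1 + x ^ 2) ≤ 1 + x := by
    rw [show (1:ℝ) + x = Real.sqrt ((1+x)^2) by rw [Real.sqrt_sq (by linarith)]]
    exact Real.sqrt_le_sqrt (by nlinarith)
  have h2 : (0:ℝ) < x + Real.sqrt (1 + x^2) := by positivity
  calc Real.log (x + Real.sqrt (1 + x^2)) ≤ (x + Real.sqrt (1 + x^2)) - 1 :=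
        Real.log_le_sub_one_of_pos h2
    _ ≤ 2 * x + 1 := by linarith

/-- For the simple pendulum Lagrangian `L(x,v) = v² + (1 - cos x)`, if
`c > 4√2/π` then there is a closed C¹ curve of winding number one with negative `c`-action. -/
theorem pendulum_alpha_flat_ends (c : ℝ) (hc : 4 * Real.sqrt 2 / Real.pi < c) :
    ∃ T : ℝ, 0 < T ∧ ∃ γ : ℝ → ℝ, ContDiff ℝ 1 γ ∧ γ T = γ 0 + 2 * Real.pi ∧
      (∫ t in (0:ℝ)..T, ((deriv γ t) ^ 2 + (1 - Real.cos (γ t)) - c * deriv γ t)) < 0 := by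
  have hπ : (0:ℝ) < π := Real.pi_pos
  have hπ3 : (3:ℝ) < π := Real.pi_gt_three
  have hπ4 : π < 4 := by nlinarith [Real.pi_lt_d2]
  have hs2 : Real.sqrt 2 ^ 2 = 2 := Real.sq_sqrt (by norm_num)
  have hs2pos : (0:ℝ) < Real.sqrt 2 := Real.sqrt_pos.2 (by norm_num)
  have hs2le : Real.sqrt 2 ≤ 1.5 := by nlinarith
  -- the energy gap
  set ε : ℝ := 2 * π * c - 8 * Real.sqrt 2 with hεdef
  have hε : 0 < ε := by
    rw [div_lt_iff₀ hπ] at hc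
    simp only [hεdef]; nlinarith
  -- parameters
  set δ : ℝ := min (1/2) (ε / 200) with hδdef
  have hδ0 : 0 < δ := lt_min (by norm_num) (by positivity)
  have hδh : δ ≤ 1/2 := min_le_left _ _
  have hδε : δ ≤ ε / 200 := min_le_right _ _
  set β : ℝ := π / 2 - δ with hβdef
  have hβ1 : 1 ≤ β := by rw [hβdef]; linarith
  have hβ0 : 0 < β := by linarith
  have hβlt : β < π / 2 := by rw [hβdef]; linarith
  set K : ℝ := π / β with hKdef
  have hKβ : K * β = π := by rw [hKdef]; field_simp
  have hK2 : 2 < K := by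
    rw [hKdef, lt_div_iff₀ hβ0]
    have : 2 * β = π - 2 * δ := by rw [hβdef]; ring
    linarith
  set m : ℝ := K / 2 - 1 with hmdef
  have hm0 : 0 < m := by rw [hmdef]; linarith
  have hK2δ : K ≤ 2 + 2 * δ := by
    rw [hKdef, div_le_iff₀ hβ0]
    have hb : β = π / 2 - δ := hβdef
    rw [hb]
    nlinarith [mul_nonneg hδ0.le (show (0:ℝ) ≤ π - 2 - 2 * δ by linarith)]
  have hmδ : m ≤ δ := by rw [hmdef]; linarith
  -- tan β bound
  have htanβ : 0 < Real.tan β := Real.tan_pos_of_pos_of_lt_pi_div_two hβ0 hβlt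
  have htanb : Real.tan β ≤ 1 / δ := by
    have h1 : Real.tan β = (Real.tan δ)⁻¹ := by
      rw [hβdef, Real.tan_pi_div_two_sub]
    have h2 : δ < Real.tan δ := Real.lt_tan hδ0 (by linarith)
    rw [h1, one_div]
    exact inv_anti₀ hδ0 h2.le
  -- the half-time
  set a : ℝ := Real.arsinh (Real.tan β) with hadef
  have ha0 : 0 < a := by rw [hadef]; exact Real.arsinh_pos_iff.2 htanβ
  have haup : a ≤ 3 / δ := by
    have h2 := arsinh_le (Real.tan β) htanβ.le
    have h1 : (1:ℝ) ≤ 1/δ := by rw [le_div_iff₀ hδ0]; linarith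
    have h3 : 3 / δ = 2 * (1/δ) + 1/δ := by ring
    rw [hadef]; linarith
  set S : ℝ := Real.sqrt 2 * a with hSdef
  have hS0 : 0 < S := by positivity
  -- the curve and its derivative
  set γ : ℝ → ℝ := fun t => π + K * Real.arctan (Real.sinh ((t - S) / Real.sqrt 2))
    with hγdef
  set d : ℝ → ℝ := fun t => K / (Real.sqrt 2 * Real.cosh ((t - S) / Real.sqrt 2))
    with hddef
  have hcoshpos : ∀ t : ℝ, (0:ℝ) < Real.cosh ((t - S) / Real.sqrt 2) :=
    fun t => Real.cosh_pos _
  have hsc : ∀ x : ℝ, 1 + Real.sinh x ^ 2 = Real.cosh x ^ 2 := by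
    intro x; rw [Real.cosh_sq]; ring
  have hasderiv : ∀ t : ℝ, HasDerivAt γ (d t) t := by
    intro t
    have h1 : HasDerivAt (fun u : ℝ => (u - S) / Real.sqrt 2) (1 / Real.sqrt 2) t := by
      simpa using ((hasDerivAt_id t).sub_const S).div_const (Real.sqrt 2)
    have h2 := (Real.hasDerivAt_sinh ((t - S) / Real.sqrt 2)).comp t h1
    have h3 := (Real.hasDerivAt_arctan (Real.sinh ((t - S) / Real.sqrt 2))).comp t h2
    have h4 := (h3.const_mul K).const_add π
    refine h4.congr_deriv ?_
    rw [hddef]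
    simp only []
    rw [hsc ((t - S) / Real.sqrt 2)]
    have hcp := hcoshpos t
    field_simp
  have hγC : ContDiff ℝ 1 γ := by
    rw [hγdef]
    apply contDiff_const.add
    apply contDiff_const.mul
    exact Real.contDiff_arctan.comp (Real.contDiff_sinh.comp
      ((contDiff_id.sub contDiff_const).div_const _))
  have hγcont : Continuous γ := hγC.continuous
  have hderiv : deriv γ = d := funext fun t => (hasderiv t).deriv
  have hdcont : Continuous d := by
    rw [hddef]
    apply continuous_const.div
    · fun_prop
    · intro t
      exact (mul_pos hs2pos (hcoshpos t)).ne'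
  -- error term
  set D : ℝ → ℝ := fun t => d t - Real.sqrt 2 * Real.sin (γ t / 2) with hDdef
  have hDcont : Continuous D := by
    rw [hDdef]
    exact hdcont.sub (continuous_const.mul (Real.continuous_sin.comp (hγcont.div_const 2)))
  -- pointwise bound on D
  have hDbound : ∀ t : ℝ, |D t| ≤ Real.sqrt 2 * (3 * m) := by
    intro t
    have hθabs : |Real.arctan (Real.sinh ((t - S) / Real.sqrt 2))| ≤ π / 2 := by
      rw [abs_le]
      exact ⟨(Real.neg_pi_div_two_lt_arctan _).le, (Real.arctan_lt_pi_div_two _).le⟩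
    set θ : ℝ := Real.arctan (Real.sinh ((t - S) / Real.sqrt 2)) with hθdef
    have hcp := hcoshpos t
    have hcosθ : Real.cos θ = 1 / Real.cosh ((t - S) / Real.sqrt 2) := by
      rw [hθdef, Real.cos_arctan]
      congr 1
      rw [hsc ((t - S) / Real.sqrt 2), Real.sqrt_sq hcp.le]
    have hsin : Real.sin (γ t / 2) = Real.cos (K / 2 * θ) := by
      have hh : γ t / 2 = π / 2 + K / 2 * θ := by
        rw [hγdef]; simp only []; rw [hθdef]; ring
      rw [hh, Real.sin_add]
      simp
    have hd : d t = Real.sqrt 2 * (K / 2 * Real.cos θ) := by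
      rw [hddef, hcosθ]
      simp only []
      field_simp
      linear_combination (-1 : ℝ) * hs2
    have hD : D t = Real.sqrt 2 * (K / 2 * Real.cos θ - Real.cos (K / 2 * θ)) := by
      rw [hDdef]; simp only []; rw [hd, hsin]; ring
    rw [hD, abs_mul, abs_of_nonneg hs2pos.le]
    apply mul_le_mul_of_nonneg_left _ hs2pos.le
    have e1 : |K / 2 * Real.cos θ - Real.cos θ| ≤ m := by
      have hh : K / 2 * Real.cos θ - Real.cos θ = m * Real.cos θ := by rw [hmdef]; ring
      rw [hh, abs_mul, abs_of_nonneg hm0.le]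
      exact mul_le_of_le_one_right hm0.le (Real.abs_cos_le_one θ)
    have e2 : |Real.cos θ - Real.cos (K / 2 * θ)| ≤ m * (π / 2) := by
      calc |Real.cos θ - Real.cos (K / 2 * θ)| ≤ |θ - K / 2 * θ| := cos_lip _ _
        _ = m * |θ| := by
          rw [show θ - K / 2 * θ = -(m * θ) by rw [hmdef]; ring, abs_neg, abs_mul,
            abs_of_nonneg hm0.le]
        _ ≤ m * (π / 2) := mul_le_mul_of_nonneg_left hθabs hm0.le
    calc |K / 2 * Real.cos θ - Real.cos (K / 2 * θ)|
        ≤ |K / 2 * Real.cos θ - Real.cos θ| + |Real.cos θ - Real.cos (K / 2 * θ)| :=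
          abs_sub_le _ _ _
      _ ≤ m + m * (π / 2) := add_le_add e1 e2
      _ ≤ 3 * m := by
          have h4 : m * (π / 2) ≤ m * 2 :=
            mul_le_mul_of_nonneg_left (by linarith) hm0.le
          linarith
  -- endpoint values
  have harc : Real.arctan (Real.sinh a) = β := by
    rw [hadef, Real.sinh_arsinh, Real.arctan_tan (by linarith) hβlt]
  have hγ0 : γ 0 = 0 := by
    have h0 : (0 - S) / Real.sqrt 2 = -a := by
      rw [hSdef, div_eq_iff hs2pos.ne']; ring
    rw [hγdef]; simp only []
    rw [h0, Real.sinh_neg, Real.arctan_neg, harc]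
    rw [show K * -β = -(K * β) by ring, hKβ]; ring
  have hγT : γ (2 * S) = 2 * π := by
    have hT : (2 * S - S) / Real.sqrt 2 = a := by
      rw [hSdef, div_eq_iff hs2pos.ne']; ring
    rw [hγdef]; simp only []
    rw [hT, harc, hKβ]; ring
  -- the curve works
  refine ⟨2 * S, by linarith, γ, hγC, by rw [hγT, hγ0]; ring, ?_⟩
  -- the action
  have key : ∀ t : ℝ, d t ^ 2 + (1 - Real.cos (γ t)) - c * d t
      = D t ^ 2 + (2 * Real.sqrt 2 * Real.sin (γ t / 2) - c) * d t := by
    intro t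
    have h1 : Real.cos (γ t) = 1 - 2 * Real.sin (γ t / 2) ^ 2 := by
      have h2 := Real.sin_sq_add_cos_sq (γ t / 2)
      have h3 := Real.cos_two_mul (γ t / 2)
      rw [show 2 * (γ t / 2) = γ t by ring] at h3
      linarith
    rw [h1, hDdef]
    simp only []
    linear_combination (-(Real.sin (γ t / 2)) ^ 2) * hs2
  have hint1 : IntervalIntegrable
      (fun t => (2 * Real.sqrt 2 * Real.sin (γ t / 2) - c) * d t)
      MeasureTheory.volume 0 (2 * S) := by
    apply Continuous.intervalIntegrable
    exact ((continuous_const.mul (Real.continuous_sin.comp (hγcont.div_const 2))).sub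
      continuous_const).mul hdcont
  have hD2int : IntervalIntegrable (fun t => D t ^ 2) MeasureTheory.volume 0 (2 * S) :=
    (hDcont.pow 2).intervalIntegrable _ _
  have hG : ∀ t ∈ Set.uIcc (0:ℝ) (2 * S),
      HasDerivAt (fun t => -(4 * Real.sqrt 2) * Real.cos (γ t / 2) - c * γ t)
        ((2 * Real.sqrt 2 * Real.sin (γ t / 2) - c) * d t) t := by
    intro t _
    have h1 : HasDerivAt (fun u : ℝ => γ u / 2) (d t / 2) t := (hasderiv t).div_const 2
    have h2 := (Real.hasDerivAt_cos (γ t / 2)).comp t h1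
    have h3 := (h2.const_mul (-(4 * Real.sqrt 2))).sub ((hasderiv t).const_mul c)
    refine h3.congr_deriv ?_
    ring
  have hFTC : (∫ t in (0:ℝ)..(2 * S), (2 * Real.sqrt 2 * Real.sin (γ t / 2) - c) * d t)
      = 8 * Real.sqrt 2 - 2 * π * c := by
    rw [intervalIntegral.integral_eq_sub_of_hasDerivAt hG hint1]
    rw [hγT, hγ0]
    norm_num [Real.cos_pi]
    ring
  have hcongr : (∫ t in (0:ℝ)..(2 * S),
        ((deriv γ t) ^ 2 + (1 - Real.cos (γ t)) - c * deriv γ t))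
      = ∫ t in (0:ℝ)..(2 * S),
        (D t ^ 2 + (2 * Real.sqrt 2 * Real.sin (γ t / 2) - c) * d t) := by
    apply intervalIntegral.integral_congr
    intro t _
    simp only [hderiv]
    exact key t
  have hbound : (∫ t in (0:ℝ)..(2 * S), D t ^ 2) ≤ 18 * m ^ 2 * (2 * S) := by
    have h1 : ∀ x ∈ Set.uIoc (0:ℝ) (2 * S), ‖D x ^ 2‖ ≤ 18 * m ^ 2 := by
      intro x _
      rw [Real.norm_eq_abs, abs_of_nonneg (sq_nonneg _)]
      have hb := hDbound x
      have h0 : D x ^ 2 = |D x| ^ 2 := (sq_abs _).symm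
      have h2 : |D x| ^ 2 ≤ (Real.sqrt 2 * (3 * m)) ^ 2 :=
        pow_le_pow_left₀ (abs_nonneg _) hb 2
      have h3 : (Real.sqrt 2 * (3 * m)) ^ 2 = 18 * m ^ 2 := by
        rw [mul_pow, hs2]; ring
      linarith
    have h2 := intervalIntegral.norm_integral_le_of_norm_le_const h1
    rw [Real.norm_eq_abs] at h2
    have h3 : |2 * S - (0:ℝ)| = 2 * S := by rw [abs_of_pos (by linarith)]; ring
    rw [h3] at h2
    exact le_trans (le_abs_self _) h2
  rw [hcongr, intervalIntegral.integral_add hD2int hint1, hFTC]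
  -- final numeric estimate
  have h2S : 2 * S ≤ 9 / δ := by
    rw [hSdef]
    calc 2 * (Real.sqrt 2 * a) ≤ 2 * (1.5 * (3 / δ)) := by
          apply mul_le_mul_of_nonneg_left _ (by norm_num)
          exact mul_le_mul hs2le haup ha0.le (by norm_num)
      _ = 9 / δ := by ring
  have hm2 : m ^ 2 ≤ δ ^ 2 := pow_le_pow_left₀ hm0.le hmδ 2
  have hfin : 18 * m ^ 2 * (2 * S) ≤ 162 * δ := by
    calc 18 * m ^ 2 * (2 * S) ≤ 18 * δ ^ 2 * (9 / δ) := by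
          apply mul_le_mul (by linarith) h2S (by linarith) (by positivity)
      _ = 162 * δ := by field_simp; ring
  have hδε' : 162 * δ ≤ 162 * (ε / 200) := by linarith
  linarith [hbound, hfin]
end
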